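/- Let V_k be a finite vertex set with measure μ and graph Laplacian Δ_k, let g, h : V_k → ℝ with h ≤ 0, and let φ_k ≥ 0. If f : [0,∞) × V_k → ℝ solves the heat equation ∂_t f = Δ_k f + h e^f − g − φ_k f, then the function u = (∂_t f)² satisfies (Δ_k − ∂_t) u ≥ 0 pointwise. -/

import Mathlib

/-!
Differentiating the heat equation in time gives
`∂_t f' = Δ f' + (h e^f − φ) f'`, so
`(Δ − ∂_t) f'² = (Δ(f'²) − 2 f' Δ f') + 2 (φ − h e^f) f'²`.
The first bracket is `(1/μ) ∑_y w (f'(y) − f'(x))² ≥ 0` by the product rule for the graph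
Laplacian, and the second is nonnegative because `h ≤ 0 ≤ φ`.
-/

open Finset

section GraphLaplacian

variable {V : Type*} [Fintype V] (μ : V → ℝ) (Adj : V → V → Prop) [DecidableRel Adj]
  (w : V → V → ℝ)

noncomputable def graphLaplacian (u : V → ℝ) (x : V) : ℝ :=
  (1 / μ x) * ∑ y ∈ univ.filter (fun y => Adj x y), w x y * (u y - u x)

theorem graphLaplacian_sq_sub_two_mul (u : V → ℝ) (x : V) :
    graphLaplacian μ Adj w (fun y => u y ^ 2) x - 2 * u x * graphLaplacian μ Adj w u x =
      (1 / μ x) * ∑ y ∈ univ.filter (fun y => Adj x y), w x y * (u y - u x) ^ 2 := by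
  simp only [graphLaplacian]
  rw [mul_left_comm (2 * u x), ← mul_sub, mul_sum, ← sum_sub_distrib]
  exact congrArg _ (sum_congr rfl fun y _ => by ring)

theorem two_mul_graphLaplacian_le_graphLaplacian_sq {x : V} (hμ : 0 < μ x)
    (hw : ∀ y, Adj x y → 0 ≤ w x y) (u : V → ℝ) :
    2 * u x * graphLaplacian μ Adj w u x ≤ graphLaplacian μ Adj w (fun y => u y ^ 2) x := by
  have hsum : 0 ≤ ∑ y ∈ univ.filter (fun y => Adj x y), w x y * (u y - u x) ^ 2 :=
    sum_nonneg fun y hy => mul_nonneg (hw y (mem_filter.mp hy).2) (sq_nonneg _)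
  have := graphLaplacian_sq_sub_two_mul μ Adj w u x
  nlinarith [mul_nonneg (one_div_nonneg.mpr hμ.le) hsum]

theorem hasDerivAt_graphLaplacian {f f' : ℝ → V → ℝ} {t : ℝ}
    (hf : ∀ y, HasDerivAt (fun s => f s y) (f' t y) t) (x : V) :
    HasDerivAt (fun s => graphLaplacian μ Adj w (f s) x) (graphLaplacian μ Adj w (f' t) x) t :=
  (HasDerivAt.fun_sum fun y _ => ((hf y).fun_sub (hf x)).const_mul (w x y)).const_mul (1 / μ x)

end GraphLaplacian

theorem heat_flow_second_time_derivative {V : Type*} [Fintype V] (μ : V → ℝ)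
    (Adj : V → V → Prop) [DecidableRel Adj] (w : V → V → ℝ) (g h φ : V → ℝ)
    {f f' f'' : ℝ → V → ℝ}
    (hd1 : ∀ x t, HasDerivAt (fun s => f s x) (f' t x) t)
    (hd2 : ∀ x t, HasDerivAt (fun s => f' s x) (f'' t x) t)
    (hheat : ∀ t ∈ Set.Ici (0 : ℝ), ∀ x, f' t x =
      graphLaplacian μ Adj w (f t) x + h x * Real.exp (f t x) - g x - φ x * f t x)
    {t : ℝ} (ht : t ∈ Set.Ici 0) (x : V) :
    f'' t x = graphLaplacian μ Adj w (f' t) x + (h x * Real.exp (f t x) - φ x) * f' t x := by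
  have hrhs : HasDerivAt
      (fun s => graphLaplacian μ Adj w (f s) x + h x * Real.exp (f s x) - g x - φ x * f s x)
      (graphLaplacian μ Adj w (f' t) x + (h x * Real.exp (f t x) - φ x) * f' t x) t := by
    have hexp := ((Real.hasDerivAt_exp (f t x)).comp t (hd1 x t)).const_mul (h x)
    exact ((((hasDerivAt_graphLaplacian μ Adj w (fun y => hd1 y t) x).fun_add hexp).fun_sub
      (hasDerivAt_const t (g x))).fun_sub ((hd1 x t).const_mul (φ x))).congr_deriv (by ring)
  -- The equation holds only on `[0, ∞)`, so at `t = 0` the derivatives are compared within `Ici 0`.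
  exact (uniqueDiffOn_Ici 0 t ht).eq_deriv _ (hd2 x t).hasDerivWithinAt
    (hrhs.hasDerivWithinAt.congr (fun s hs => hheat s hs x) (hheat t ht x))

theorem heat_flow_time_derivative_subsolution_general {V : Type*} [Fintype V]
    (μ : V → ℝ) (hμ : ∀ x, 0 < μ x)
    (Adj : V → V → Prop) [DecidableRel Adj]
    (w : V → V → ℝ)
    (hwpos : ∀ x y, Adj x y → 0 < w x y)
    (Δ : (V → ℝ) → V → ℝ)
    (hΔ : ∀ u x, Δ u x =
      (1 / μ x) * ∑ y ∈ Finset.univ.filter (fun y => Adj x y), w x y * (u y - u x))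
    (g h φ : V → ℝ) (hh : ∀ x, h x ≤ 0) (hφ : ∀ x, 0 ≤ φ x)
    (f f' f'' : ℝ → V → ℝ)
    (hd1 : ∀ x t, HasDerivAt (fun s => f s x) (f' t x) t)
    (hd2 : ∀ x t, HasDerivAt (fun s => f' s x) (f'' t x) t)
    (hheat : ∀ t ∈ Set.Ici (0 : ℝ), ∀ x,
      f' t x = Δ (f t) x + h x * Real.exp (f t x) - g x - φ x * f t x) :
    ∀ t ∈ Set.Ici (0 : ℝ), ∀ x,
      0 ≤ Δ (fun y => (f' t y) ^ 2) x - 2 * f' t x * f'' t x := by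
  obtain rfl : Δ = graphLaplacian μ Adj w := funext₂ hΔ
  intro t ht x
  have hf'' := heat_flow_second_time_derivative μ Adj w g h φ hd1 hd2 hheat ht x
  have hcarre := two_mul_graphLaplacian_le_graphLaplacian_sq μ Adj w (hμ x)
    (fun y hy => (hwpos x y hy).le) (f' t)
  have hreaction : 0 ≤ (φ x - h x * Real.exp (f t x)) * f' t x ^ 2 :=
    mul_nonneg (by nlinarith [hh x, hφ x, Real.exp_pos (f t x)]) (sq_nonneg _)
  rw [hf'']
  linarith

/-- If `f` solves the heat equation `∂_t f = Δ_k f + h e^f − g − φ_k f` with `h ≤ 0` and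
`φ_k ≥ 0`, then `u = (∂_t f)²` satisfies `(Δ_k − ∂_t) u ≥ 0` pointwise on `[0,∞)`. -/
theorem heat_flow_time_derivative_subsolution {V : Type*} [Fintype V]
    (μ : V → ℝ) (hμ : ∀ x, 0 < μ x)
    (Adj : V → V → Prop) [DecidableRel Adj] (hAdj : Symmetric Adj)
    (w : V → V → ℝ) (hwsymm : ∀ x y, w x y = w y x)
    (hwpos : ∀ x y, Adj x y → 0 < w x y)
    (Δ : (V → ℝ) → V → ℝ)
    (hΔ : ∀ u x, Δ u x =
      (1 / μ x) * ∑ y ∈ Finset.univ.filter (fun y => Adj x y), w x y * (u y - u x))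
    (g h φ : V → ℝ) (hh : ∀ x, h x ≤ 0) (hφ : ∀ x, 0 ≤ φ x)
    (f f' f'' : ℝ → V → ℝ)
    (hd1 : ∀ x t, HasDerivAt (fun s => f s x) (f' t x) t)
    (hd2 : ∀ x t, HasDerivAt (fun s => f' s x) (f'' t x) t)
    (hheat : ∀ t ∈ Set.Ici (0 : ℝ), ∀ x,
      f' t x = Δ (f t) x + h x * Real.exp (f t x) - g x - φ x * f t x) :
    ∀ t ∈ Set.Ici (0 : ℝ), ∀ x,
      0 ≤ Δ (fun y => (f' t y) ^ 2) x - 2 * f' t x * f'' t x :=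
  heat_flow_time_derivative_subsolution_general μ hμ Adj w hwpos Δ hΔ g h φ hh hφ f f' f'' hd1 hd2
    hheat
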